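/- arXiv:0707.3211 — 2 statements merged into one kernel-verified Lean document; each statement's English description precedes it below -/
import Mathlib

section
/- Let (f₀,φ₀) be a minimizer of the energy functional, i.e. an admissible pair with 𝓔(f₀,φ₀) = I^k_{M,J}. Then the L^{1+1/k} constraint is saturated, ‖f₀‖_{L^{1+1/k}} = J, and the potential is nonpositive, φ₀(x) ≤ 0 for almost every x ∈ ℝ³. -/
/-!
If `‖f₀‖_{L^{1+1/k}} < J`, the momentum dilation `f_r(x,p) = r³ f₀(x, r p)` keeps the mass and
multiplies the `L^q` norm by `r^{3(1-1/q)}`, so for `r > 1` close to `1` it is still admissible;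
since `√(e^{2φ} + |p/r|²) < √(e^{2φ} + |p|²)` for `p ≠ 0`, it has strictly smaller kinetic energy.

If `φ₀ > 0` somewhere, compose it with the `C¹` truncation
`θ(s) = min(s,0) + log(1 + max(s,0))`. As `θ(s) ≤ s` the kinetic energy does not increase, and as
`0 < θ' < 1` on `(0,∞)` the field energy strictly decreases: `∇φ₀` cannot vanish on all of
`{φ₀ > 0}`, for then `φ₀` would be a positive constant, which does not vanish at infinity.
-/

open MeasureTheory Real Filter Topology
open scoped ENNReal

noncomputable section

/-- Euclidean 3-space. -/
abbrev E3 := EuclideanSpace ℝ (Fin 3)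

/-- `φ` belongs to (a C¹ surrogate of) the space `D¹(ℝ³)`: it is continuously
differentiable, its gradient is square integrable and it vanishes at infinity in
the sense that `{|φ| > a}` has finite measure for every `a > 0`. -/
def IsPotential (φ : E3 → ℝ) : Prop :=
  ContDiff ℝ 1 φ ∧ (∫⁻ x : E3, ENNReal.ofReal (‖gradient φ x‖ ^ 2)) < ⊤ ∧
    ∀ a : ℝ, 0 < a → volume {x : E3 | a < |φ x|} < ⊤

/-- `f ∈ Γ^k_{M,J}`: `f` is measurable, a.e. nonnegative, with `‖f‖_{L¹} = M` and
`‖f‖_{L^{1+1/k}} ≤ J` (in particular `f ∈ L¹ ∩ L^{1+1/k}`). -/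
def InGamma (k M J : ℝ) (f : E3 → E3 → ℝ) : Prop :=
  Measurable (Function.uncurry f) ∧
  (∀ᵐ z : E3 × E3, 0 ≤ f z.1 z.2) ∧
  (∫⁻ z : E3 × E3, ENNReal.ofReal (f z.1 z.2)) = ENNReal.ofReal M ∧
  eLpNorm (Function.uncurry f) (ENNReal.ofReal (1 + 1/k)) volume ≤ ENNReal.ofReal J

/-- Kinetic energy `E_kin(f,φ) = ∫∫ √(e^{2φ(x)}+|p|²) f(x,p) dp dx` (value in `[0,∞]`). -/
def kinE (f : E3 → E3 → ℝ) (φ : E3 → ℝ) : ℝ≥0∞ :=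
  ∫⁻ z : E3 × E3, ENNReal.ofReal (Real.sqrt (Real.exp (2 * φ z.1) + ‖z.2‖ ^ 2) * f z.1 z.2)

/-- Energy functional `𝓔(f,φ) = E_kin(f,φ) + (1/2)∫ |∇φ|²` (value in `[0,∞]`). -/
def energy (f : E3 → E3 → ℝ) (φ : E3 → ℝ) : ℝ≥0∞ :=
  kinE f φ + (∫⁻ x : E3, ENNReal.ofReal (‖gradient φ x‖ ^ 2)) / 2

/-- `(f,φ)` is admissible: `f ∈ Γ^k_{M,J}`, `φ` is a potential and
`∫∫ √(1+|p|²) f dp dx < ∞`. -/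
def Admissible (k M J : ℝ) (f : E3 → E3 → ℝ) (φ : E3 → ℝ) : Prop :=
  InGamma k M J f ∧ IsPotential φ ∧
  (∫⁻ z : E3 × E3, ENNReal.ofReal (Real.sqrt (1 + ‖z.2‖ ^ 2) * f z.1 z.2)) < ⊤

/-- The energy infimum `I^k_{M,J} = inf {𝓔(f,φ) : (f,φ) admissible}`. -/
def energyInf (k M J : ℝ) : ℝ≥0∞ :=
  sInf { e : ℝ≥0∞ | ∃ f φ, Admissible k M J f φ ∧ e = energy f φ }


open Function Module

def logTrunc (s : ℝ) : ℝ := min s 0 + log (1 + max s 0)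

lemma logTrunc_of_nonpos {s : ℝ} (hs : s ≤ 0) : logTrunc s = s := by
  simp [logTrunc, hs]

lemma logTrunc_of_nonneg {s : ℝ} (hs : 0 ≤ s) : logTrunc s = log (1 + s) := by
  simp [logTrunc, hs]

lemma logTrunc_le (s : ℝ) : logTrunc s ≤ s := by
  rcases le_total s 0 with hs | hs
  · rw [logTrunc_of_nonpos hs]
  · rw [logTrunc_of_nonneg hs]
    linarith [log_le_sub_one_of_pos (x := 1 + s) (by linarith)]

lemma abs_logTrunc_le (s : ℝ) : |logTrunc s| ≤ |s| := by
  rcases le_total s 0 with hs | hs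
  · rw [logTrunc_of_nonpos hs]
  · rw [logTrunc_of_nonneg hs, abs_of_nonneg (log_nonneg (by linarith)), abs_of_nonneg hs]
    linarith [log_le_sub_one_of_pos (x := 1 + s) (by linarith)]

lemma hasDerivAt_logTrunc (s : ℝ) : HasDerivAt logTrunc (1 + max s 0)⁻¹ s := by
  have left (t : ℝ) (ht : t ≤ 0) : HasDerivWithinAt logTrunc 1 (Set.Iic 0) t :=
    (hasDerivAt_id t).hasDerivWithinAt.congr (fun u hu => logTrunc_of_nonpos hu)
      (logTrunc_of_nonpos ht)
  have right (t : ℝ) (ht : 0 ≤ t) : HasDerivWithinAt logTrunc (1 + t)⁻¹ (Set.Ici 0) t := by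
    have h := ((hasDerivAt_id t).const_add 1).log (by simp; linarith)
    simp only [id, one_div] at h
    exact h.hasDerivWithinAt.congr (fun u hu => logTrunc_of_nonneg hu) (logTrunc_of_nonneg ht)
  rcases lt_trichotomy s 0 with hs | rfl | hs
  · simpa [hs.le] using (left s hs.le).hasDerivAt (Iic_mem_nhds hs)
  · have h := (left 0 le_rfl).union (by simpa using right 0 le_rfl)
    rw [Set.Iic_union_Ici, hasDerivWithinAt_univ] at h
    simpa using h
  · simpa [hs.le] using (right s hs.le).hasDerivAt (Ici_mem_nhds hs)

lemma contDiff_logTrunc : ContDiff ℝ 1 logTrunc := by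
  rw [contDiff_one_iff_deriv]
  refine ⟨fun s => (hasDerivAt_logTrunc s).differentiableAt, ?_⟩
  rw [show deriv logTrunc = fun s => (1 + max s 0)⁻¹ from
    funext fun s => (hasDerivAt_logTrunc s).deriv]
  exact (continuous_const.add (continuous_id.max continuous_const)).inv₀ fun s =>
    (add_pos_of_pos_of_nonneg one_pos (le_max_right s 0)).ne'

lemma gradient_logTrunc_comp {φ : E3 → ℝ} {x : E3} (hφ : DifferentiableAt ℝ φ x) :
    gradient (fun y => logTrunc (φ y)) x = (1 + max (φ x) 0)⁻¹ • gradient φ x := by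
  have h : HasFDerivAt (fun y => logTrunc (φ y)) ((1 + max (φ x) 0)⁻¹ • fderiv ℝ φ x) x :=
    (hasDerivAt_logTrunc (φ x)).comp_hasFDerivAt x hφ.hasFDerivAt
  rw [gradient, h.fderiv, map_smul, gradient]

lemma eq_of_fderiv_eq_zero_of_pos {E : Type*} [NormedAddCommGroup E] [NormedSpace ℝ E]
    {φ : E → ℝ} (hφ : Differentiable ℝ φ) (hzero : ∀ x, 0 < φ x → fderiv ℝ φ x = 0)
    {x₀ : E} (hx₀ : 0 < φ x₀) (x : E) : φ x = φ x₀ := by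
  have hopen : IsOpen {y | φ y = φ x₀} := by
    refine Metric.isOpen_iff.2 fun y (hy : φ y = φ x₀) => ?_
    obtain ⟨ε, hε, hball⟩ := Metric.isOpen_iff.1 (isOpen_lt continuous_const hφ.continuous) y
      (show 0 < φ y by rwa [hy])
    refine ⟨ε, hε, fun z hz => ?_⟩
    rw [Set.mem_ofPred_eq, ← hy]
    exact Metric.isOpen_ball.is_const_of_fderiv_eq_zero (convex_ball y ε).isPreconnected
      hφ.differentiableOn (fun w hw => hzero w (hball hw)) hz (Metric.mem_ball_self hε)
  have hclopen : IsClopen {y | φ y = φ x₀} := ⟨isClosed_eq hφ.continuous continuous_const, hopen⟩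
  exact Set.eq_univ_iff_forall.1 (hclopen.eq_univ ⟨x₀, rfl⟩) x

lemma ContDiff.continuous_gradient {F : Type*} [NormedAddCommGroup F] [InnerProductSpace ℝ F]
    [CompleteSpace F] {φ : F → ℝ} (hφ : ContDiff ℝ 1 φ) : Continuous (gradient φ) :=
  (InnerProductSpace.toDual ℝ F).symm.continuous.comp (hφ.continuous_fderiv one_ne_zero)

section LogTruncPotential

variable {φ : E3 → ℝ}

lemma norm_gradient_logTrunc_comp {x : E3} (hφ : DifferentiableAt ℝ φ x) :
    ‖gradient (fun y => logTrunc (φ y)) x‖ = (1 + max (φ x) 0)⁻¹ * ‖gradient φ x‖ := by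
  rw [gradient_logTrunc_comp hφ, norm_smul, norm_inv,
    Real.norm_of_nonneg (add_nonneg zero_le_one (le_max_right _ _))]

lemma norm_gradient_logTrunc_comp_le {x : E3} (hφ : DifferentiableAt ℝ φ x) :
    ‖gradient (fun y => logTrunc (φ y)) x‖ ≤ ‖gradient φ x‖ := by
  rw [norm_gradient_logTrunc_comp hφ]
  exact mul_le_of_le_one_left (norm_nonneg _)
    (inv_le_one_of_one_le₀ (le_add_of_nonneg_right (le_max_right _ _)))

lemma norm_gradient_logTrunc_comp_lt {x : E3} (hφ : DifferentiableAt ℝ φ x) (hx : 0 < φ x)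
    (hg : gradient φ x ≠ 0) :
    ‖gradient (fun y => logTrunc (φ y)) x‖ < ‖gradient φ x‖ := by
  rw [norm_gradient_logTrunc_comp hφ]
  exact mul_lt_of_lt_one_left (norm_pos_iff.2 hg)
    (inv_lt_one_of_one_lt₀ (lt_add_of_pos_right 1 (lt_max_of_lt_left hx)))

lemma IsPotential.logTrunc_comp (hφ : IsPotential φ) : IsPotential fun x => logTrunc (φ x) := by
  refine ⟨contDiff_logTrunc.comp hφ.1, (lintegral_mono fun x => ?_).trans_lt hφ.2.1,
    fun a ha => (measure_mono fun x hx => ?_).trans_lt (hφ.2.2 a ha)⟩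
  · gcongr
    exact norm_gradient_logTrunc_comp_le (hφ.1.differentiable one_ne_zero x)
  · exact lt_of_lt_of_le hx (abs_logTrunc_le _)

lemma IsPotential.exists_pos_gradient_ne_zero (hφ : IsPotential φ) {x₀ : E3} (hx₀ : 0 < φ x₀) :
    ∃ x, 0 < φ x ∧ gradient φ x ≠ 0 := by
  by_contra! h
  have hconst := eq_of_fderiv_eq_zero_of_pos (hφ.1.differentiable one_ne_zero)
    (fun x hx => by rw [← toDual_gradient, h x hx, map_zero]) hx₀
  have huniv : {x : E3 | φ x₀ / 2 < |φ x|} = Set.univ := Set.eq_univ_of_forall fun x => by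
    simp only [Set.mem_ofPred_eq, hconst x, abs_of_pos hx₀]
    linarith
  have hfin := hφ.2.2 _ (half_pos hx₀)
  rw [huniv, measure_univ_of_isAddLeftInvariant] at hfin
  exact lt_irrefl _ hfin

lemma IsPotential.lintegral_gradient_logTrunc_comp_lt (hφ : IsPotential φ) {x : E3}
    (hx : 0 < φ x) (hg : gradient φ x ≠ 0) :
    ∫⁻ y, ENNReal.ofReal (‖gradient (fun y => logTrunc (φ y)) y‖ ^ 2)
      < ∫⁻ y, ENNReal.ofReal (‖gradient φ y‖ ^ 2) := by
  have hdiff := hφ.1.differentiable one_ne_zero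
  have hle (y : E3) : ENNReal.ofReal (‖gradient (fun y => logTrunc (φ y)) y‖ ^ 2)
      ≤ ENNReal.ofReal (‖gradient φ y‖ ^ 2) := by
    gcongr
    exact norm_gradient_logTrunc_comp_le (hdiff y)
  refine lintegral_strict_mono_of_ae_le_of_frequently_ae_lt
    (hφ.1.continuous_gradient.norm.pow 2).measurable.ennreal_ofReal.aemeasurable
    (ne_top_of_le_ne_top hφ.2.1.ne (lintegral_mono hle)) (ae_of_all _ hle) ?_
  have hopen : IsOpen {y | 0 < φ y ∧ gradient φ y ≠ 0} :=
    (isOpen_lt continuous_const hφ.1.continuous).inter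
      (isOpen_ne_fun hφ.1.continuous_gradient continuous_const)
  rw [frequently_ae_iff]
  refine ((hopen.measure_pos volume ⟨x, hx, hg⟩).trans_le (measure_mono fun y hy => ?_)).ne'
  exact ((ENNReal.ofReal_lt_ofReal_iff (pow_pos (norm_pos_iff.2 hy.2) 2)).2
    (by gcongr; exact norm_gradient_logTrunc_comp_lt (hdiff y) hy.1 hy.2)).ne

end LogTruncPotential

section Dilation

theorem MeasureTheory.Measure.map_prodMap_id_smul {α F : Type*} [MeasurableSpace α]
    (ν : Measure α) [SFinite ν] [NormedAddCommGroup F] [NormedSpace ℝ F] [MeasurableSpace F]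
    [BorelSpace F] [FiniteDimensional ℝ F] (μ : Measure F) [μ.IsAddHaarMeasure] {r : ℝ} (hr : r ≠ 0) :
    (ν.prod μ).map (Prod.map id (r • ·)) = ENNReal.ofReal |(r ^ finrank ℝ F)⁻¹| • ν.prod μ := by
  rw [← Measure.map_prod_map _ _ measurable_id (measurable_const_smul r), Measure.map_id,
    Measure.map_addHaar_smul μ hr, Measure.prod_smul_right]

lemma volume_map_prodMap_id_smul {r : ℝ} (hr : 0 < r) :
    (volume : Measure (E3 × E3)).map (Prod.map id (r • ·)) = ENNReal.ofReal (r ^ 3)⁻¹ • volume := by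
  rw [Measure.volume_eq_prod, Measure.map_prodMap_id_smul _ _ hr.ne', finrank_euclideanSpace_fin,
    abs_of_pos (by positivity)]

def momentumDilate (r : ℝ) (f : E3 → E3 → ℝ) : E3 → E3 → ℝ := fun x p => r ^ 3 * f x (r • p)

variable {f : E3 → E3 → ℝ} {r : ℝ}

lemma measurable_momentumDilate (hf : Measurable (uncurry f)) (r : ℝ) :
    Measurable (uncurry (momentumDilate r f)) :=
  measurable_const.mul (hf.comp (measurable_fst.prodMk (measurable_snd.const_smul r)))

lemma ae_nonneg_momentumDilate (hr : 0 < r) (hf0 : ∀ᵐ z : E3 × E3, 0 ≤ f z.1 z.2) :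
    ∀ᵐ z : E3 × E3, 0 ≤ momentumDilate r f z.1 z.2 := by
  have hqmp : Measure.QuasiMeasurePreserving (Prod.map id (r • ·) : E3 × E3 → E3 × E3) :=
    ⟨by fun_prop, by rw [volume_map_prodMap_id_smul hr]; exact Measure.smul_absolutelyContinuous⟩
  exact (hqmp.ae hf0).mono fun z hz => mul_nonneg (by positivity) hz

lemma lintegral_mul_momentumDilate (hr : 0 < r) (hf : Measurable (uncurry f))
    {w : E3 × E3 → ℝ} (hw : Measurable w) :
    ∫⁻ z, ENNReal.ofReal (w z * momentumDilate r f z.1 z.2)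
      = ∫⁻ z : E3 × E3, ENNReal.ofReal (w (z.1, r⁻¹ • z.2) * f z.1 z.2) := by
  set G : E3 × E3 → ℝ≥0∞ := fun z => ENNReal.ofReal (w (z.1, r⁻¹ • z.2) * f z.1 z.2)
  have hG : Measurable G := by fun_prop
  calc ∫⁻ z, ENNReal.ofReal (w z * momentumDilate r f z.1 z.2)
      = ∫⁻ z, ENNReal.ofReal (r ^ 3) * G (Prod.map id (r • ·) z) := by
        refine lintegral_congr fun z => ?_
        simp only [G, Prod.map_fst, Prod.map_snd, id, inv_smul_smul₀ hr.ne', momentumDilate]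
        rw [← ENNReal.ofReal_mul (by positivity)]
        ring_nf
    _ = ENNReal.ofReal (r ^ 3) * ∫⁻ z, G z ∂(volume.map (Prod.map id (r • ·))) := by
        rw [lintegral_const_mul' _ _ ENNReal.ofReal_ne_top, lintegral_map hG (by fun_prop)]
    _ = ∫⁻ z, G z := by
        rw [volume_map_prodMap_id_smul hr, lintegral_smul_measure, smul_eq_mul, ← mul_assoc,
          ← ENNReal.ofReal_mul (by positivity), mul_inv_cancel₀ (by positivity),
          ENNReal.ofReal_one, one_mul]

lemma lintegral_momentumDilate (hr : 0 < r) (hf : Measurable (uncurry f)) :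
    ∫⁻ z : E3 × E3, ENNReal.ofReal (momentumDilate r f z.1 z.2)
      = ∫⁻ z : E3 × E3, ENNReal.ofReal (f z.1 z.2) := by
  simpa using lintegral_mul_momentumDilate hr hf (w := 1) measurable_const

lemma eLpNorm_momentumDilate (hr : 0 < r) (hf : Measurable (uncurry f)) {p : ℝ≥0∞}
    (hp : p ≠ ∞) :
    eLpNorm (uncurry (momentumDilate r f)) p volume
      = ENNReal.ofReal (r ^ 3 * ((r ^ 3)⁻¹) ^ (1 / p).toReal) * eLpNorm (uncurry f) p volume := by
  have h : uncurry (momentumDilate r f) = (r ^ 3) • (uncurry f ∘ Prod.map id (r • ·)) := rfl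
  rw [h, eLpNorm_const_smul, ← eLpNorm_map_measure hf.aestronglyMeasurable (by fun_prop),
    volume_map_prodMap_id_smul hr, eLpNorm_smul_measure_of_ne_top hp, smul_eq_mul, ← mul_assoc,
    enorm_eq_ofReal (by positivity), ENNReal.ofReal_rpow_of_nonneg (by positivity) (by positivity),
    ← ENNReal.ofReal_mul (by positivity)]

lemma exists_one_lt_eLpNorm_momentumDilate_lt (hf : Measurable (uncurry f)) {p : ℝ≥0∞}
    (hp : p ≠ ∞) {A : ℝ≥0∞} (hA : eLpNorm (uncurry f) p volume < A) :
    ∃ r, 1 < r ∧ eLpNorm (uncurry (momentumDilate r f)) p volume < A := by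
  have hcont : ContinuousAt (fun r : ℝ => r ^ 3 * ((r ^ 3)⁻¹) ^ (1 / p).toReal) 1 := by
    fun_prop (disch := norm_num)
  have hlim := ENNReal.Tendsto.mul_const
    ((ENNReal.continuous_ofReal.continuousAt.comp hcont).tendsto.mono_left nhdsWithin_le_nhds)
    (Or.inr hA.ne_top) (f := 𝓝[>] (1 : ℝ))
  simp only [Function.comp_apply, one_pow, inv_one, one_rpow, mul_one, ENNReal.ofReal_one,
    one_mul] at hlim
  obtain ⟨r, hrA, hr⟩ := ((hlim.eventually (gt_mem_nhds hA)).and self_mem_nhdsWithin).exists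
  exact ⟨r, hr, by rwa [eLpNorm_momentumDilate (one_pos.trans hr) hf hp]⟩

end Dilation

section KineticEnergy

variable {f : E3 → E3 → ℝ} {r : ℝ} {a : E3 → ℝ}

lemma norm_inv_smul_le {E : Type*} [NormedAddCommGroup E] [NormedSpace ℝ E] (hr : 1 ≤ r)
    (p : E) : ‖r⁻¹ • p‖ ≤ ‖p‖ := by
  rw [norm_smul, norm_inv, Real.norm_of_nonneg (zero_le_one.trans hr)]
  exact mul_le_of_le_one_left (norm_nonneg _) (inv_le_one_of_one_le₀ hr)

lemma norm_inv_smul_lt {E : Type*} [NormedAddCommGroup E] [NormedSpace ℝ E] (hr : 1 < r)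
    {p : E} (hp : p ≠ 0) : ‖r⁻¹ • p‖ < ‖p‖ := by
  rw [norm_smul, norm_inv, Real.norm_of_nonneg (zero_le_one.trans hr.le)]
  exact mul_lt_of_lt_one_left (norm_pos_iff.2 hp) (inv_lt_one_of_one_lt₀ hr)

lemma lintegral_sqrt_mul_momentumDilate_le (ha : Measurable a) (hf : Measurable (uncurry f))
    (hf0 : ∀ᵐ z : E3 × E3, 0 ≤ f z.1 z.2) (hr : 1 ≤ r) :
    ∫⁻ z : E3 × E3, ENNReal.ofReal (sqrt (a z.1 + ‖z.2‖ ^ 2) * momentumDilate r f z.1 z.2)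
      ≤ ∫⁻ z : E3 × E3, ENNReal.ofReal (sqrt (a z.1 + ‖z.2‖ ^ 2) * f z.1 z.2) := by
  rw [lintegral_mul_momentumDilate (one_pos.trans_le hr) hf (by fun_prop)]
  refine lintegral_mono_ae (hf0.mono fun z hz => ?_)
  gcongr
  exact norm_inv_smul_le hr _

lemma lintegral_sqrt_mul_momentumDilate_lt (ha : Measurable a) (ha0 : ∀ x, 0 ≤ a x)
    (hf : Measurable (uncurry f)) (hf0 : ∀ᵐ z : E3 × E3, 0 ≤ f z.1 z.2)
    (hmass : ∫⁻ z : E3 × E3, ENNReal.ofReal (f z.1 z.2) ≠ 0)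
    (hfin : ∫⁻ z : E3 × E3, ENNReal.ofReal (sqrt (a z.1 + ‖z.2‖ ^ 2) * f z.1 z.2) ≠ ∞)
    (hr : 1 < r) :
    ∫⁻ z : E3 × E3, ENNReal.ofReal (sqrt (a z.1 + ‖z.2‖ ^ 2) * momentumDilate r f z.1 z.2)
      < ∫⁻ z : E3 × E3, ENNReal.ofReal (sqrt (a z.1 + ‖z.2‖ ^ 2) * f z.1 z.2) := by
  have hle := lintegral_sqrt_mul_momentumDilate_le ha hf hf0 hr.le
  rw [lintegral_mul_momentumDilate (one_pos.trans hr) hf (by fun_prop)] at hle ⊢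
  have hpos : ∃ᵐ z : E3 × E3, 0 < f z.1 z.2 := by
    by_contra! h
    refine hmass (lintegral_eq_zero_iff (by fun_prop) |>.2 ?_)
    exact h.mono fun z hz => ENNReal.ofReal_eq_zero.2 hz
  have hp0 : ∀ᵐ z : E3 × E3, z.2 ≠ 0 := by
    have h0 : ∀ᵐ p : E3, p ≠ 0 := by simp [ae_iff]
    rw [Measure.volume_eq_prod]
    exact Measure.quasiMeasurePreserving_snd.ae h0
  refine lintegral_strict_mono_of_ae_le_of_frequently_ae_lt (by fun_prop)
    (ne_top_of_le_ne_top hfin hle) (hf0.mono fun z hz => ?_)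
    ((hpos.and_eventually hp0).mono fun z ⟨hfz, hz⟩ => ?_)
  · dsimp only
    gcongr
    exact norm_inv_smul_le hr.le _
  · dsimp only
    refine ((ENNReal.ofReal_lt_ofReal_iff ?_).2 ?_).ne
    · exact mul_pos (sqrt_pos.2 (add_pos_of_nonneg_of_pos (ha0 _)
        (pow_pos (norm_pos_iff.2 hz) 2))) hfz
    · gcongr ?_ * _
      refine sqrt_lt_sqrt (add_nonneg (ha0 _) (sq_nonneg _)) ?_
      gcongr
      exact norm_inv_smul_lt hr hz

end KineticEnergy

section Minimizer

variable {k M J : ℝ} {f : E3 → E3 → ℝ} {φ : E3 → ℝ}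

lemma kinE_mono (f : E3 → E3 → ℝ) : Monotone (kinE f) := fun φ ψ h =>
  lintegral_mono fun z => by
    rw [ENNReal.ofReal_mul (sqrt_nonneg _), ENNReal.ofReal_mul (sqrt_nonneg _)]
    gcongr
    exact h z.1

lemma isPotential_zero : IsPotential 0 :=
  ⟨contDiff_const, by simp [Pi.zero_def, gradient_fun_const], fun a ha => by simp [ha.not_gt]⟩

lemma energy_zero (f : E3 → E3 → ℝ) :
    energy f 0 = ∫⁻ z : E3 × E3, ENNReal.ofReal (sqrt (1 + ‖z.2‖ ^ 2) * f z.1 z.2) := by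
  simp [energy, kinE, Pi.zero_def, gradient_fun_const]

def IsEnergyMinimizer (k M J : ℝ) (f : E3 → E3 → ℝ) (φ : E3 → ℝ) : Prop :=
  Admissible k M J f φ ∧ ∀ g ψ, Admissible k M J g ψ → energy f φ ≤ energy g ψ

lemma isEnergyMinimizer_of_energy_eq_energyInf (h : Admissible k M J f φ)
    (hmin : energy f φ = energyInf k M J) : IsEnergyMinimizer k M J f φ :=
  ⟨h, fun g ψ hg => hmin ▸ sInf_le ⟨g, ψ, hg, rfl⟩⟩

lemma IsEnergyMinimizer.kinE_ne_top (h : IsEnergyMinimizer k M J f φ) : kinE f φ ≠ ∞ := by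
  have hE : energy f φ < ∞ :=
    (h.2 f 0 ⟨h.1.1, isPotential_zero, h.1.2.2⟩).trans_lt (energy_zero f ▸ h.1.2.2)
  exact (ENNReal.add_lt_top.1 hE).1.ne

lemma Admissible.momentumDilate {r : ℝ} (h : Admissible k M J f φ) (hr : 1 ≤ r)
    (hnorm : eLpNorm (uncurry (momentumDilate r f)) (ENNReal.ofReal (1 + 1 / k)) volume
      ≤ ENNReal.ofReal J) :
    Admissible k M J (momentumDilate r f) φ := by
  obtain ⟨⟨hfm, hf0, hmass, -⟩, hφ, hfin⟩ := h
  have hr0 : 0 < r := one_pos.trans_le hr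
  exact ⟨⟨measurable_momentumDilate hfm r, ae_nonneg_momentumDilate hr0 hf0,
    (lintegral_momentumDilate hr0 hfm).trans hmass, hnorm⟩, hφ,
    (lintegral_sqrt_mul_momentumDilate_le measurable_const hfm hf0 hr).trans_lt hfin⟩

theorem IsEnergyMinimizer.eLpNorm_eq (hM : 0 < M) (h : IsEnergyMinimizer k M J f φ) :
    eLpNorm (uncurry f) (ENNReal.ofReal (1 + 1 / k)) volume = ENNReal.ofReal J := by
  have hkin_fin := h.kinE_ne_top
  obtain ⟨hadm, hmin⟩ := h
  have ⟨⟨hfm, hf0, hmass, hnorm⟩, hφ, _⟩ := hadm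
  have hφm : Measurable φ := hφ.1.continuous.measurable
  refine hnorm.eq_of_not_lt fun hlt => ?_
  obtain ⟨r, hr, hrJ⟩ := exists_one_lt_eLpNorm_momentumDilate_lt hfm ENNReal.ofReal_ne_top hlt
  have hkin : kinE (momentumDilate r f) φ < kinE f φ :=
    lintegral_sqrt_mul_momentumDilate_lt (a := fun x => exp (2 * φ x))
      (by fun_prop) (fun x => (exp_pos _).le) hfm hf0
      (hmass ▸ (ENNReal.ofReal_pos.2 hM).ne') hkin_fin hr
  refine (hmin _ _ (hadm.momentumDilate hr.le hrJ.le)).not_gt ?_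
  exact ENNReal.add_lt_add_right (ENNReal.div_ne_top hφ.2.1.ne two_ne_zero) hkin

theorem IsEnergyMinimizer.ae_nonpos (h : IsEnergyMinimizer k M J f φ) : ∀ᵐ x, φ x ≤ 0 := by
  have hkin_fin := h.kinE_ne_top
  obtain ⟨⟨hf, hφ, hfin⟩, hmin⟩ := h
  by_contra hne
  obtain ⟨x₀, hx₀⟩ : ∃ x, 0 < φ x := by
    simpa using (not_eventually.1 hne).exists
  obtain ⟨x, hx, hgrad⟩ := hφ.exists_pos_gradient_ne_zero hx₀
  have hkin : kinE f (fun x => logTrunc (φ x)) ≤ kinE f φ := kinE_mono f fun x => logTrunc_le _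
  refine (hmin _ _ ⟨hf, hφ.logTrunc_comp, hfin⟩).not_gt ?_
  exact ENNReal.add_lt_add_of_le_of_lt (ne_top_of_le_ne_top hkin_fin hkin) hkin
    (ENNReal.div_lt_div_right two_ne_zero ENNReal.ofNat_ne_top
      (hφ.lintegral_gradient_logTrunc_comp_lt hx hgrad))

end Minimizer

theorem minimizer_saturates_and_nonpositive_general (k M J : ℝ)
    (hM : 0 < M)
    (f₀ : E3 → E3 → ℝ) (φ₀ : E3 → ℝ)
    (hadm : Admissible k M J f₀ φ₀)
    (hmin : energy f₀ φ₀ = energyInf k M J) :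
    eLpNorm (Function.uncurry f₀) (ENNReal.ofReal (1 + 1/k)) volume = ENNReal.ofReal J
    ∧ ∀ᵐ x : E3, φ₀ x ≤ 0 := by
  have h := isEnergyMinimizer_of_energy_eq_energyInf hadm hmin
  exact ⟨h.eLpNorm_eq hM, h.ae_nonpos⟩

/-- a minimizer `(f₀,φ₀)` of the energy functional saturates the
`L^{1+1/k}` constraint, `‖f₀‖_{L^{1+1/k}} = J`, and has a.e. nonpositive potential. -/
theorem minimizer_saturates_and_nonpositive (k M J : ℝ)
    (hk : 0 < k) (hk2 : k < 2) (hM : 0 < M) (hJ : 0 < J)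
    (f₀ : E3 → E3 → ℝ) (φ₀ : E3 → ℝ)
    (hadm : Admissible k M J f₀ φ₀)
    (hmin : energy f₀ φ₀ = energyInf k M J) :
    eLpNorm (Function.uncurry f₀) (ENNReal.ofReal (1 + 1/k)) volume = ENNReal.ofReal J
    ∧ ∀ᵐ x : E3, φ₀ x ≤ 0 :=
  minimizer_saturates_and_nonpositive_general k M J hM f₀ φ₀ hadm hmin
end
end

section
/- Let (f₀,φ₀) be a minimizer of the energy functional, i.e. an admissible pair with 𝓔(f₀,φ₀) = I^k_{M,J}. Then the relativistic Virial identity holds: (1/2)∫_{ℝ³} |∇φ₀(x)|² dx = ∫_{ℝ³}∫_{ℝ³} |p|² (e^{2φ₀(x)}+|p|²)^{-1/2} f₀(x,p) dp dx. -/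
/-!
Dilating a pair to `(f (l • x) (l⁻¹ • p), φ (l • x))` preserves admissibility; it turns the
kinetic energy into `∫∫ √(e^{2φ} + l² |p|²) f` and, in dimension three, multiplies `∫ |∇φ|²` by
`l⁻¹`. Since `t ↦ √(a + t b)` is concave, the kinetic term lies below its tangent at `t = 1`, whose
slope is half the right-hand side `V` of the Virial identity. Minimality of the pair against all
its dilations therefore gives `G ≤ (l² - 1) / 2 * V + l⁻¹ * G` for every `l > 0`, where `G` is half
the field energy; equality holds at `l = 1`, so the derivatives at `l = 1` agree: `V = G`.
-/

open MeasureTheory Real Filter Topology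
open scoped ENNReal

noncomputable section

lemma Real.sqrt_le_sqrt_add_sub_div {x y : ℝ} (hx : 0 < x) (hy : 0 ≤ y) :
    √y ≤ √x + (y - x) / (2 * √x) := by
  have hsx : 0 < √x := Real.sqrt_pos.2 hx
  rw [← sub_nonneg]
  have key : √x + (y - x) / (2 * √x) - √y = (√y - √x) ^ 2 / (2 * √x) := by
    field_simp
    rw [sub_sq, Real.sq_sqrt hx.le, Real.sq_sqrt hy]
    ring
  rw [key]
  positivity

lemma ENNReal.ofReal_add_ofReal_neg_mul_le {x y s w : ℝ} (hx : 0 ≤ x) (hy : 0 ≤ y) (hw : 0 ≤ w)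
    (h : x ≤ y + s * w) :
    ENNReal.ofReal x + ENNReal.ofReal (-s) * ENNReal.ofReal w
      ≤ ENNReal.ofReal y + ENNReal.ofReal s * ENNReal.ofReal w := by
  rcases le_total s 0 with hs | hs
  · rw [ENNReal.ofReal_of_nonpos hs, zero_mul, add_zero, ← ENNReal.ofReal_mul (by linarith),
      ← ENNReal.ofReal_add hx (by nlinarith)]
    exact ENNReal.ofReal_le_ofReal (by linarith)
  · rw [ENNReal.ofReal_of_nonpos (neg_nonpos.2 hs), zero_mul, add_zero,
      ← ENNReal.ofReal_mul hs, ← ENNReal.ofReal_add hy (by positivity)]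
    exact ENNReal.ofReal_le_ofReal h

lemma ENNReal.toReal_le_add_mul_of_add_ofReal_neg_mul_le {a b v : ℝ≥0∞} {s : ℝ} (hb : b ≠ ⊤)
    (hv : v ≠ ⊤) (h : a + ENNReal.ofReal (-s) * v ≤ b + ENNReal.ofReal s * v) :
    a.toReal ≤ b.toReal + s * v.toReal := by
  rcases le_total s 0 with hs | hs
  · rw [ENNReal.ofReal_of_nonpos hs, zero_mul, add_zero] at h
    have h' := ENNReal.toReal_mono hb h
    rw [ENNReal.toReal_add (ne_top_of_le_ne_top hb (le_self_add.trans h))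
      (ENNReal.mul_ne_top ENNReal.ofReal_ne_top hv), ENNReal.toReal_mul,
      ENNReal.toReal_ofReal (neg_nonneg.2 hs)] at h'
    nlinarith [ENNReal.toReal_nonneg (a := v)]
  · rw [ENNReal.ofReal_of_nonpos (neg_nonpos.2 hs), zero_mul, add_zero] at h
    have hbv : ENNReal.ofReal s * v ≠ ⊤ := ENNReal.mul_ne_top ENNReal.ofReal_ne_top hv
    have h' := ENNReal.toReal_mono (ENNReal.add_ne_top.2 ⟨hb, hbv⟩) h
    rwa [ENNReal.toReal_add hb hbv, ENNReal.toReal_mul, ENNReal.toReal_ofReal hs] at h'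

lemma eq_of_forall_le_sq_sub_one_div_two_mul_add_inv_mul {g v : ℝ}
    (h : ∀ l : ℝ, 0 < l → g ≤ (l ^ 2 - 1) / 2 * v + l⁻¹ * g) : g = v := by
  have hmin : IsLocalMin (fun l : ℝ => (l ^ 2 - 1) / 2 * v + l⁻¹ * g) 1 := by
    filter_upwards [eventually_gt_nhds one_pos] with l hl
    simpa using h l hl
  have hquad : HasDerivAt (fun l : ℝ => (l ^ 2 - 1) / 2 * v) v 1 := by
    simpa using (((hasDerivAt_pow 2 (1 : ℝ)).sub_const 1).div_const 2).mul_const v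
  have hinv : HasDerivAt (fun l : ℝ => l⁻¹ * g) (-g) 1 := by
    simpa using (hasDerivAt_inv one_ne_zero).mul_const g
  linarith [hmin.hasDerivAt_eq_zero (hquad.add hinv)]

lemma Real.sqrt_one_add_sq_mul_le {l b : ℝ} (hl : 0 ≤ l) (hb : 0 ≤ b) :
    √(1 + l ^ 2 * b) ≤ (1 + l) * √(1 + b) := by
  rw [← Real.sqrt_sq (by linarith : 0 ≤ 1 + l), ← Real.sqrt_mul (sq_nonneg _)]
  exact Real.sqrt_le_sqrt (by nlinarith)

section HaarDilation

variable {E : Type*} [NormedAddCommGroup E] [NormedSpace ℝ E] [FiniteDimensional ℝ E]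
  [MeasurableSpace E] [BorelSpace E] (μ : Measure E) [μ.IsAddHaarMeasure] {l : ℝ}

lemma measurePreserving_smul_prod_inv_smul (hl : l ≠ 0) :
    MeasurePreserving (fun z : E × E => (l • z.1, l⁻¹ • z.2)) (μ.prod μ) (μ.prod μ) := by
  refine ⟨(measurable_const_smul l).prodMap (measurable_const_smul l⁻¹), ?_⟩
  change Measure.map (Prod.map (l • ·) (l⁻¹ • ·)) (μ.prod μ) = μ.prod μ
  rw [← Measure.map_prod_map μ μ (measurable_const_smul l) (measurable_const_smul l⁻¹),
    Measure.map_addHaar_smul μ hl, Measure.map_addHaar_smul μ (inv_ne_zero hl),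
    Measure.prod_smul_left, Measure.prod_smul_right, smul_smul, ← ENNReal.ofReal_mul (abs_nonneg _),
    inv_pow, inv_inv, ← abs_mul, inv_mul_cancel₀ (pow_ne_zero _ hl), abs_one, ENNReal.ofReal_one,
    one_smul]

lemma lintegral_comp_smul_prod_inv_smul (hl : l ≠ 0) (g : E × E → ℝ≥0∞) :
    ∫⁻ z, g (l • z.1, l⁻¹ • z.2) ∂μ.prod μ = ∫⁻ z, g z ∂μ.prod μ :=
  (measurePreserving_smul_prod_inv_smul μ hl).lintegral_comp_emb
    ((MeasurableEquiv.smul₀ l hl).prodCongr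
      (MeasurableEquiv.smul₀ l⁻¹ (inv_ne_zero hl))).measurableEmbedding g

lemma lintegral_comp_smul (hl : l ≠ 0) (g : E → ℝ≥0∞) :
    ∫⁻ x, g (l • x) ∂μ = ENNReal.ofReal |(l ^ Module.finrank ℝ E)⁻¹| * ∫⁻ x, g x ∂μ := by
  rw [← smul_eq_mul, ← lintegral_smul_measure, ← Measure.map_addHaar_smul μ hl]
  exact (lintegral_map_equiv g (MeasurableEquiv.smul₀ l hl)).symm

lemma lintegral_ofReal_mul_comp_smul_prod_inv_smul (hl : l ≠ 0) (w : E → ℝ → ℝ)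
    (f : E → E → ℝ) :
    ∫⁻ z, ENNReal.ofReal (w (l • z.1) (‖z.2‖ ^ 2) * f (l • z.1) (l⁻¹ • z.2)) ∂μ.prod μ
      = ∫⁻ z, ENNReal.ofReal (w z.1 (l ^ 2 * ‖z.2‖ ^ 2) * f z.1 z.2) ∂μ.prod μ := by
  refine Eq.trans ?_ (lintegral_comp_smul_prod_inv_smul μ hl _)
  congr! 4 with z
  dsimp only
  rw [norm_smul, mul_pow, Real.norm_eq_abs, sq_abs, ← mul_assoc, inv_pow,
    mul_inv_cancel₀ (pow_ne_zero 2 hl), one_mul]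

end HaarDilation

lemma gradient_comp_smul {F : Type*} [NormedAddCommGroup F] [InnerProductSpace ℝ F]
    [CompleteSpace F] {φ : F → ℝ} {l : ℝ} {x : F} (hφ : DifferentiableAt ℝ φ (l • x)) :
    gradient (fun y => φ (l • y)) x = l • gradient φ (l • x) := by
  have h := hφ.hasGradientAt.hasFDerivAt.comp x ((hasFDerivAt_id x).const_smul l)
  have hdual : (InnerProductSpace.toDual ℝ F (gradient φ (l • x))).comp
      (l • ContinuousLinearMap.id ℝ F) = InnerProductSpace.toDual ℝ F (l • gradient φ (l • x)) := by
    ext w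
    simp
  rw [hdual] at h
  exact (hasGradientAt_iff_hasFDerivAt.2 h).gradient

lemma lintegral_norm_gradient_comp_smul_sq {E : Type*} [NormedAddCommGroup E]
    [InnerProductSpace ℝ E] [FiniteDimensional ℝ E] [MeasurableSpace E] [BorelSpace E]
    (μ : Measure E) [μ.IsAddHaarMeasure] {φ : E → ℝ} {l : ℝ} (hφ : Differentiable ℝ φ)
    (hl : 0 < l) :
    ∫⁻ x, ENNReal.ofReal (‖gradient (fun y => φ (l • y)) x‖ ^ 2) ∂μ
      = ENNReal.ofReal (l ^ 2 / l ^ Module.finrank ℝ E)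
        * ∫⁻ x, ENNReal.ofReal (‖gradient φ x‖ ^ 2) ∂μ := by
  simp_rw [gradient_comp_smul (hφ _), norm_smul, mul_pow, Real.norm_eq_abs, sq_abs,
    ENNReal.ofReal_mul (sq_nonneg l)]
  rw [lintegral_const_mul' _ _ ENNReal.ofReal_ne_top,
    lintegral_comp_smul μ hl.ne' fun x => ENNReal.ofReal (‖gradient φ x‖ ^ 2), ← mul_assoc,
    ← ENNReal.ofReal_mul (sq_nonneg l), abs_of_pos (by positivity), div_eq_mul_inv]

def dirichletE (φ : E3 → ℝ) : ℝ≥0∞ :=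
  ∫⁻ x : E3, ENNReal.ofReal (‖gradient φ x‖ ^ 2)

def kinEScaled (f : E3 → E3 → ℝ) (φ : E3 → ℝ) (t : ℝ) : ℝ≥0∞ :=
  ∫⁻ z : E3 × E3, ENNReal.ofReal (√(exp (2 * φ z.1) + t * ‖z.2‖ ^ 2) * f z.1 z.2)

/-- `d/dt kinEScaled f φ t = virialE f φ / 2` at `t = 1`. -/
def virialE (f : E3 → E3 → ℝ) (φ : E3 → ℝ) : ℝ≥0∞ :=
  ∫⁻ z : E3 × E3, ENNReal.ofReal (‖z.2‖ ^ 2 / √(exp (2 * φ z.1) + ‖z.2‖ ^ 2) * f z.1 z.2)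

lemma energy_eq (f : E3 → E3 → ℝ) (φ : E3 → ℝ) : energy f φ = kinE f φ + dirichletE φ / 2 :=
  rfl

section Dilation

variable {k M J l : ℝ} {f : E3 → E3 → ℝ} {φ : E3 → ℝ}

lemma dirichletE_comp_smul (hφ : Differentiable ℝ φ) (hl : 0 < l) :
    dirichletE (fun x => φ (l • x)) = ENNReal.ofReal l⁻¹ * dirichletE φ := by
  rw [dirichletE, lintegral_norm_gradient_comp_smul_sq volume hφ hl, finrank_euclideanSpace_fin]
  congr 2
  field_simp

lemma kinE_comp_smul (hl : l ≠ 0) :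
    kinE (fun x p => f (l • x) (l⁻¹ • p)) (fun x => φ (l • x)) = kinEScaled f φ (l ^ 2) := by
  rw [kinE, kinEScaled, Measure.volume_eq_prod]
  exact lintegral_ofReal_mul_comp_smul_prod_inv_smul volume hl (fun y s => √(exp (2 * φ y) + s)) f

lemma energy_comp_smul (hφ : Differentiable ℝ φ) (hl : 0 < l) :
    energy (fun x p => f (l • x) (l⁻¹ • p)) (fun x => φ (l • x))
      = kinEScaled f φ (l ^ 2) + ENNReal.ofReal l⁻¹ * (dirichletE φ / 2) := by
  rw [energy, kinE_comp_smul hl.ne', ← dirichletE, dirichletE_comp_smul hφ hl, mul_div_assoc]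

lemma InGamma.comp_smul (h : InGamma k M J f) (hl : l ≠ 0) :
    InGamma k M J (fun x p => f (l • x) (l⁻¹ • p)) := by
  obtain ⟨hmeas, hnonneg, hmass, hnorm⟩ := h
  have hT : MeasurePreserving (fun z : E3 × E3 => (l • z.1, l⁻¹ • z.2)) :=
    measurePreserving_smul_prod_inv_smul volume hl
  refine ⟨hmeas.comp hT.measurable, hT.quasiMeasurePreserving.ae hnonneg, ?_, ?_⟩
  · rw [← hmass, Measure.volume_eq_prod]
    exact lintegral_comp_smul_prod_inv_smul volume hl fun z => ENNReal.ofReal (f z.1 z.2)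
  · rwa [← eLpNorm_comp_measurePreserving hmeas.aestronglyMeasurable hT] at hnorm

lemma IsPotential.comp_smul (h : IsPotential φ) (hl : 0 < l) :
    IsPotential (fun x => φ (l • x)) := by
  obtain ⟨hφ, hgrad, hvanish⟩ := h
  refine ⟨hφ.comp (contDiff_const_smul l), ?_, fun a ha => ?_⟩
  · rw [← dirichletE, dirichletE_comp_smul (hφ.differentiable one_ne_zero) hl]
    exact ENNReal.mul_lt_top ENNReal.ofReal_lt_top hgrad
  · rw [show {x : E3 | a < |φ (l • x)|} = (l • ·) ⁻¹' {x | a < |φ x|} from rfl,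
      Measure.addHaar_preimage_smul _ hl.ne']
    exact ENNReal.mul_lt_top ENNReal.ofReal_lt_top (hvanish a ha)

lemma lintegral_sqrt_one_add_mul_comp_smul_lt_top (hf : ∀ᵐ z : E3 × E3, 0 ≤ f z.1 z.2)
    (hmom : ∫⁻ z : E3 × E3, ENNReal.ofReal (√(1 + ‖z.2‖ ^ 2) * f z.1 z.2) < ⊤) (hl : 0 < l) :
    ∫⁻ z : E3 × E3, ENNReal.ofReal (√(1 + ‖z.2‖ ^ 2) * f (l • z.1) (l⁻¹ • z.2)) < ⊤ := by
  rw [Measure.volume_eq_prod, lintegral_ofReal_mul_comp_smul_prod_inv_smul volume hl.ne'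
    (fun _ s => √(1 + s)) f, ← Measure.volume_eq_prod]
  calc _ ≤ ∫⁻ z : E3 × E3,
        ENNReal.ofReal (1 + l) * ENNReal.ofReal (√(1 + ‖z.2‖ ^ 2) * f z.1 z.2) := by
        refine lintegral_mono_ae (hf.mono fun z hz => ?_)
        rw [← ENNReal.ofReal_mul (by linarith), ← mul_assoc]
        exact ENNReal.ofReal_le_ofReal (mul_le_mul_of_nonneg_right
          (Real.sqrt_one_add_sq_mul_le hl.le (sq_nonneg _)) hz)
    _ < ⊤ := by
      rw [lintegral_const_mul' _ _ ENNReal.ofReal_ne_top]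
      exact ENNReal.mul_lt_top ENNReal.ofReal_lt_top hmom

lemma Admissible.comp_smul (h : Admissible k M J f φ) (hl : 0 < l) :
    Admissible k M J (fun x p => f (l • x) (l⁻¹ • p)) (fun x => φ (l • x)) :=
  ⟨h.1.comp_smul hl.ne', h.2.1.comp_smul hl,
    lintegral_sqrt_one_add_mul_comp_smul_lt_top h.1.2.1 h.2.2 hl⟩

end Dilation

lemma isPotential_zero_s11 : IsPotential (fun _ => 0) :=
  ⟨contDiff_const, by simp, fun a ha => by simp [not_lt.2 ha.le]⟩

lemma energy_zero_potential (f : E3 → E3 → ℝ) :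
    energy f (fun _ => 0) = ∫⁻ z : E3 × E3, ENNReal.ofReal (√(1 + ‖z.2‖ ^ 2) * f z.1 z.2) := by
  simp [energy, kinE]

section Virial

variable {f : E3 → E3 → ℝ} {φ : E3 → ℝ}

lemma virialE_le_kinE (hf : ∀ᵐ z : E3 × E3, 0 ≤ f z.1 z.2) : virialE f φ ≤ kinE f φ := by
  refine lintegral_mono_ae (hf.mono fun z hz => ENNReal.ofReal_le_ofReal ?_)
  refine mul_le_mul_of_nonneg_right ?_ hz
  have hpos : 0 < exp (2 * φ z.1) + ‖z.2‖ ^ 2 := by positivity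
  rw [div_le_iff₀ (Real.sqrt_pos.2 hpos), Real.mul_self_sqrt hpos.le]
  linarith [exp_pos (2 * φ z.1)]

/-- Concavity of `t ↦ kinEScaled f φ t`: the graph lies below its tangent at `t = 1`. Each side
carries only the nonnegative part of the signed correction `(t - 1) / 2 * virialE f φ`. -/
lemma kinEScaled_add_le (hf : Measurable (Function.uncurry f))
    (hf0 : ∀ᵐ z : E3 × E3, 0 ≤ f z.1 z.2) (hφ : Measurable φ) {t : ℝ} (ht : 0 ≤ t) :
    kinEScaled f φ t + ENNReal.ofReal (-((t - 1) / 2)) * virialE f φ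
      ≤ kinE f φ + ENNReal.ofReal ((t - 1) / 2) * virialE f φ := by
  have hf' : Measurable fun z : E3 × E3 => f z.1 z.2 := hf
  have hv : Measurable fun z : E3 × E3 =>
      ENNReal.ofReal (‖z.2‖ ^ 2 / √(exp (2 * φ z.1) + ‖z.2‖ ^ 2) * f z.1 z.2) := by
    fun_prop
  rw [virialE, ← lintegral_const_mul _ hv, ← lintegral_const_mul _ hv, kinE,
    ← lintegral_add_right _ (hv.const_mul _)]
  refine (le_lintegral_add _ _).trans (lintegral_mono_ae (hf0.mono fun z hz => ?_))
  have hpos : 0 < exp (2 * φ z.1) + ‖z.2‖ ^ 2 := by positivity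
  have htangent := Real.sqrt_le_sqrt_add_sub_div hpos
    (by positivity : 0 ≤ exp (2 * φ z.1) + t * ‖z.2‖ ^ 2)
  refine ENNReal.ofReal_add_ofReal_neg_mul_le (by positivity) (by positivity) (by positivity) ?_
  calc √(exp (2 * φ z.1) + t * ‖z.2‖ ^ 2) * f z.1 z.2
      ≤ (√(exp (2 * φ z.1) + ‖z.2‖ ^ 2) + (exp (2 * φ z.1) + t * ‖z.2‖ ^ 2
          - (exp (2 * φ z.1) + ‖z.2‖ ^ 2)) / (2 * √(exp (2 * φ z.1) + ‖z.2‖ ^ 2))) * f z.1 z.2 :=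
        mul_le_mul_of_nonneg_right htangent hz
    _ = _ := by ring

lemma toReal_dirichletE_div_two_le_of_energy_le (hf : Measurable (Function.uncurry f))
    (hf0 : ∀ᵐ z : E3 × E3, 0 ≤ f z.1 z.2) (hφ : Differentiable ℝ φ) (hK : kinE f φ ≠ ⊤)
    (hG : dirichletE φ / 2 ≠ ⊤) {l : ℝ} (hl : 0 < l)
    (hdil : energy f φ ≤ energy (fun x p => f (l • x) (l⁻¹ • p)) (fun x => φ (l • x))) :
    (dirichletE φ / 2).toReal
      ≤ (l ^ 2 - 1) / 2 * (virialE f φ).toReal + l⁻¹ * (dirichletE φ / 2).toReal := by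
  have hV : virialE f φ ≠ ⊤ := ne_top_of_le_ne_top hK (virialE_le_kinE hf0)
  have htangent := kinEScaled_add_le hf hf0 hφ.continuous.measurable (sq_nonneg l)
  have hKl : kinEScaled f φ (l ^ 2) ≠ ⊤ := ne_top_of_le_ne_top
    (ENNReal.add_ne_top.2 ⟨hK, ENNReal.mul_ne_top ENNReal.ofReal_ne_top hV⟩)
    (le_self_add.trans htangent)
  have hGl : ENNReal.ofReal l⁻¹ * (dirichletE φ / 2) ≠ ⊤ :=
    ENNReal.mul_ne_top ENNReal.ofReal_ne_top hG
  rw [energy_eq, energy_comp_smul hφ hl] at hdil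
  have hdil' := ENNReal.toReal_mono (ENNReal.add_ne_top.2 ⟨hKl, hGl⟩) hdil
  rw [ENNReal.toReal_add hK hG, ENNReal.toReal_add hKl hGl, ENNReal.toReal_mul,
    ENNReal.toReal_ofReal (inv_nonneg.2 hl.le)] at hdil'
  linarith [ENNReal.toReal_le_add_mul_of_add_ofReal_neg_mul_le hK hV htangent]

end Virial

theorem minimizer_virial_general (k M J : ℝ)
    (f₀ : E3 → E3 → ℝ) (φ₀ : E3 → ℝ)
    (hadm : Admissible k M J f₀ φ₀)
    (hmin : energy f₀ φ₀ = energyInf k M J) :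
    (∫⁻ x : E3, ENNReal.ofReal (‖gradient φ₀ x‖ ^ 2)) / 2
      = ∫⁻ z : E3 × E3,
          ENNReal.ofReal
            (‖z.2‖ ^ 2 / Real.sqrt (Real.exp (2 * φ₀ z.1) + ‖z.2‖ ^ 2) * f₀ z.1 z.2) := by
  obtain ⟨⟨hf, hf0, -⟩, ⟨hφ, hG, -⟩, hmom⟩ := id hadm
  have hle : ∀ f φ, Admissible k M J f φ → energy f₀ φ₀ ≤ energy f φ :=
    fun f φ h => hmin ▸ sInf_le ⟨f, φ, h, rfl⟩
  have hK : kinE f₀ φ₀ ≠ ⊤ := by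
    refine ne_top_of_le_ne_top ?_ (le_self_add.trans (hle _ _ ⟨hadm.1, isPotential_zero_s11, hmom⟩))
    exact (energy_zero_potential f₀ ▸ hmom).ne
  have hG2 : dirichletE φ₀ / 2 ≠ ⊤ := ENNReal.div_ne_top hG.ne two_ne_zero
  refine (ENNReal.toReal_eq_toReal_iff' hG2
    (ne_top_of_le_ne_top hK (virialE_le_kinE hf0))).1 ?_
  exact eq_of_forall_le_sq_sub_one_div_two_mul_add_inv_mul fun l hl =>
    toReal_dirichletE_div_two_le_of_energy_le hf hf0 (hφ.differentiable one_ne_zero) hK hG2 hl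
      (hle _ _ (hadm.comp_smul hl))

/-- the relativistic Virial identity for a minimizer `(f₀,φ₀)`:
`(1/2) ∫ |∇φ₀|² dx = ∫∫ |p|² (e^{2φ₀}+|p|²)^{-1/2} f₀ dp dx`. -/
theorem minimizer_virial (k M J : ℝ)
    (hk : 0 < k) (hk2 : k < 2) (hM : 0 < M) (hJ : 0 < J)
    (f₀ : E3 → E3 → ℝ) (φ₀ : E3 → ℝ)
    (hadm : Admissible k M J f₀ φ₀)
    (hmin : energy f₀ φ₀ = energyInf k M J) :
    (∫⁻ x : E3, ENNReal.ofReal (‖gradient φ₀ x‖ ^ 2)) / 2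
      = ∫⁻ z : E3 × E3,
          ENNReal.ofReal
            (‖z.2‖ ^ 2 / Real.sqrt (Real.exp (2 * φ₀ z.1) + ‖z.2‖ ^ 2) * f₀ z.1 z.2) :=
  minimizer_virial_general k M J f₀ φ₀ hadm hmin
end
end
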